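/- arXiv:1911.04112 — 3 statements merged into one kernel-verified Lean document; each statement's English description precedes it below -/
import Mathlib

section
/- Let Φ_Q be a DQBF with matrix φ and dependency sets D_{y_j}, and let Φ_S be the DSSAT formula obtained by replacing each universal quantifier ∀x_i with the randomized quantifier with probability 0.5. Then Φ_Q is satisfiable (there exist Skolem functions making φ a tautology over the universal variables) if and only if there exists a set of Skolem functions F with Pr[Φ_S|_F] ≥ 1. -/
/-- A DQBF `Φ_Q` is satisfiable iff the DSSAT formula `Φ_S` obtained by
replacing each universal quantifier by a randomized quantifier with probability `0.5`
admits Skolem functions `F` with `Pr[Φ_S|F] ≥ 1`. Here `Pr[Φ_S|F] = 2^{-n}` times the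
number of satisfying assignments of the matrix with existentials substituted by `F`. -/
theorem dqbf_sat_iff_dssat_prob_ge_one (n m : ℕ)
    (φ : (Fin n → Bool) → (Fin m → Bool) → Bool)
    (D : Fin m → Finset (Fin n)) :
    (∃ F : Fin m → (Fin n → Bool) → Bool,
        (∀ j α β, (∀ i ∈ D j, α i = β i) → F j α = F j β) ∧
        ∀ α : Fin n → Bool, φ α (fun j => F j α) = true) ↔
    (∃ F : Fin m → (Fin n → Bool) → Bool,
        (∀ j α β, (∀ i ∈ D j, α i = β i) → F j α = F j β) ∧
        1 ≤ ∑ α : Fin n → Bool,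
              (if φ α (fun j => F j α) then ((1 : ℝ) / 2) ^ n else 0)) := by
  have hsum : ∑ _α : Fin n → Bool, ((1 : ℝ) / 2) ^ n = 1 := by
    rw [Finset.sum_const, Finset.card_univ, Fintype.card_fun, Fintype.card_bool,
      Fintype.card_fin, nsmul_eq_mul]
    push_cast
    rw [div_pow, one_pow]
    field_simp
  constructor
  · rintro ⟨F, hdep, hsat⟩
    refine ⟨F, hdep, ?_⟩
    have : ∑ α : Fin n → Bool,
        (if φ α (fun j => F j α) then ((1 : ℝ) / 2) ^ n else 0)
        = ∑ _α : Fin n → Bool, ((1 : ℝ) / 2) ^ n := by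
      apply Finset.sum_congr rfl
      intro α _
      rw [hsat α]
      simp
    rw [this, hsum]
  · rintro ⟨F, hdep, hle⟩
    refine ⟨F, hdep, ?_⟩
    by_contra h
    push_neg at h
    obtain ⟨α₀, hα₀⟩ := h
    have hlt : ∑ α : Fin n → Bool,
        (if φ α (fun j => F j α) then ((1 : ℝ) / 2) ^ n else 0)
        < ∑ _α : Fin n → Bool, ((1 : ℝ) / 2) ^ n := by
      apply Finset.sum_lt_sum
      · intro α _
        split
        · exact le_refl _
        · positivity
      · refine ⟨α₀, Finset.mem_univ _, ?_⟩
        rw [if_neg (by simp [hα₀])]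
        positivity
    rw [hsum] at hlt
    linarith
end

section
/- For a Dec-POMDP with planning horizon h = 1, a joint action a⃗ maximizes the expected reward Σ_s Δ_0(s) r(s,a⃗) if and only if the corresponding set of constant Skolem functions F maximizes the satisfying probability Pr[Φ|_F] of the encoding DSSAT formula, and moreover V(a⃗) = Pr[Φ|_F]. -/
/-- The value `V(a⃗) = Σ_s Δ_0(s) r(s,a⃗)` of a joint action in a Dec-POMDP with
planning horizon `h = 1`. -/
def decPomdpH1Value {S : Type} [Fintype S] {n : ℕ} {A : Fin n → Type}
    [∀ i, Fintype (A i)] (Δ0 : S → ℝ) (r : S × (∀ i, A i) → ℝ) (a : ∀ i, A i) : ℝ :=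
  ∑ s, Δ0 s * r (s, a)

/-- The satisfying probability `Pr[Φ|F]` of the encoding DSSAT formula
`Я x_s^0, Я x_r^0, ∃ x_a^{1,0}(∅),…,∃ x_a^{n,0}(∅). φ` with respect to the constant
Skolem functions given by the joint action `a`, where the matrix is
`⋀_{s,a⃗} [x_s^0 = s ∧ ⋀_i x_a^{i,0} = a_i → x_r^0 = N_r(s,a⃗)]`. -/
def decPomdpH1Pr {S : Type} [Fintype S] [DecidableEq S] {n : ℕ} {A : Fin n → Type}
    [∀ i, Fintype (A i)] [∀ i, DecidableEq (A i)]
    (Δ0 : S → ℝ) (r : S × (∀ i, A i) → ℝ) (a : ∀ i, A i) : ℝ :=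
  ∑ s, ∑ x : S × (∀ i, A i),
    Δ0 s * r x *
      (if ∀ (s₀ : S) (a₀ : ∀ i, A i), (s = s₀ ∧ ∀ i, a i = a₀ i) → x = (s₀, a₀)
       then 1 else 0)


lemma decPomdpH1Pr_eq {S : Type} [Fintype S] [DecidableEq S] {n : ℕ} {A : Fin n → Type}
    [∀ i, Fintype (A i)] [∀ i, DecidableEq (A i)]
    (Δ0 : S → ℝ) (r : S × (∀ i, A i) → ℝ) (a : ∀ i, A i) :
    decPomdpH1Pr Δ0 r a = decPomdpH1Value Δ0 r a := by
  unfold decPomdpH1Pr decPomdpH1Value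
  refine Finset.sum_congr rfl fun s _ => ?_
  have key : ∀ x : S × (∀ i, A i),
      (∀ (s₀ : S) (a₀ : ∀ i, A i), (s = s₀ ∧ ∀ i, a i = a₀ i) → x = (s₀, a₀)) ↔
      x = (s, a) := by
    intro x
    constructor
    · intro h; exact h s a ⟨rfl, fun i => rfl⟩
    · rintro rfl s₀ a₀ ⟨rfl, h⟩
      have : a = a₀ := funext h
      simp [this]
  calc ∑ x : S × (∀ i, A i), Δ0 s * r x *
        (if ∀ (s₀ : S) (a₀ : ∀ i, A i), (s = s₀ ∧ ∀ i, a i = a₀ i) → x = (s₀, a₀)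
         then 1 else 0)
      = ∑ x : S × (∀ i, A i), Δ0 s * r x * (if x = (s, a) then 1 else 0) := by
        refine Finset.sum_congr rfl fun x _ => ?_
        rw [if_congr (key x) rfl rfl]
    _ = Δ0 s * r (s, a) := by simp

/-- For a Dec-POMDP with `h = 1`, a joint action maximizes the expected
reward iff the corresponding constant Skolem functions maximize the satisfying
probability of the encoding DSSAT formula; moreover the value equals the satisfying
probability. -/
theorem decPomdp_h1_encoding (S : Type) [Fintype S] [DecidableEq S] (n : ℕ)
    (A : Fin n → Type) [∀ i, Fintype (A i)] [∀ i, DecidableEq (A i)]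
    [∀ i, Nonempty (A i)]
    (Δ0 : S → ℝ) (hΔ0 : (∀ s, 0 ≤ Δ0 s) ∧ ∑ s, Δ0 s = 1)
    (r : S × (∀ i, A i) → ℝ) (hr : (∀ x, 0 ≤ r x) ∧ ∑ x, r x = 1)
    (a : ∀ i, A i) :
    decPomdpH1Value Δ0 r a = decPomdpH1Pr Δ0 r a ∧
    ((∀ a' : ∀ i, A i, decPomdpH1Value Δ0 r a' ≤ decPomdpH1Value Δ0 r a) ↔
      (∀ a' : ∀ i, A i, decPomdpH1Pr Δ0 r a' ≤ decPomdpH1Pr Δ0 r a)) := by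
  constructor
  · rw [decPomdpH1Pr_eq]
  · constructor <;> intro h a' <;>
      simpa [decPomdpH1Pr_eq] using h a'
end

section
/- For a Dec-POMDP with h = 1, for any joint action a⃗, the satisfying probability of the encoding matrix ⋀_s [x_s^0 ≠ s ∨ x_r^0 = N_r(s,a⃗)] under independent distributions x_s^0 ∼ Δ_0 and x_r^0 ∼ r equals Σ_{s∈S} Δ_0(s) · r(s,a⃗). -/
/-- For a Dec-POMDP with `h = 1` and any joint action `a⃗`, the
satisfying probability of the matrix `⋀_s [x_s^0 ≠ s ∨ x_r^0 = N_r(s,a⃗)]` under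
independent distributions `x_s^0 ∼ Δ_0` and `x_r^0 ∼ r` equals
`Σ_s Δ_0(s) · r(s,a⃗)`. -/
theorem decPomdp_h1_matrix_prob (S : Type) [Fintype S] [DecidableEq S]
    (JA : Type) [Fintype JA] [DecidableEq JA]
    (Δ0 : S → ℝ) (hΔ0 : (∀ s, 0 ≤ Δ0 s) ∧ ∑ s, Δ0 s = 1)
    (r : S × JA → ℝ) (hr : (∀ x, 0 ≤ r x) ∧ ∑ x, r x = 1)
    (a : JA) :
    (∑ s : S, ∑ x : S × JA,
        Δ0 s * r x * (if ∀ s₀ : S, s ≠ s₀ ∨ x = (s₀, a) then 1 else 0)) =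
      ∑ s : S, Δ0 s * r (s, a) := by
  refine Finset.sum_congr rfl fun s _ => ?_
  have hcond : ∀ x : S × JA, (∀ s₀ : S, s ≠ s₀ ∨ x = (s₀, a)) ↔ x = (s, a) := by
    intro x
    constructor
    · intro h
      rcases h s with h | h
      · exact absurd rfl h
      · exact h
    · intro h s₀
      by_cases hs : s = s₀
      · right; rw [h, hs]
      · left; exact hs
  calc ∑ x : S × JA, Δ0 s * r x * (if ∀ s₀ : S, s ≠ s₀ ∨ x = (s₀, a) then 1 else 0)
      = ∑ x : S × JA, (if x = (s, a) then Δ0 s * r x else 0) := by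
        refine Finset.sum_congr rfl fun x _ => ?_
        simp [hcond x]
    _ = Δ0 s * r (s, a) := by simp
end
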